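/- Let f: ℝⁿ → ℝ be differentiable with L-Lipschitz gradient, let g: ℝⁿ → ℝ be convex (e.g., g(a) = λ‖a‖₁), and let γ ∈ (0, 1/L]. If a⁺ = argmin_z { ⟨∇f(a), z - a⟩ + (1/(2γ))‖z - a‖₂² + g(z) }, then f(a⁺) + g(a⁺) - (f(a) + g(a)) ≤ -(1/(2γ))‖a⁺ - a‖₂². -/

import Mathlib

/-!
The descent lemma bounds `f a⁺` by the linearization of `f` at `a` plus `L/2 ‖a⁺ - a‖²`.
The model `z ↦ ⟪∇f a, z - a⟫ + g z + 1/(2γ) ‖z - a‖²` is `1/γ`-strongly convex and minimized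
at `a⁺`, so its value `g a` at `a` exceeds its minimum by at least `1/(2γ) ‖a - a⁺‖²`.
Adding the two estimates and using `L ≤ 1/γ` gives the decrease.
-/

open scoped RealInnerProductSpace

open Set Filter Topology

section NormedSpace

variable {E : Type*} [NormedAddCommGroup E] [NormedSpace ℝ E]

theorem StrongConvexOn.add_half_mul_sq_norm_sub_le_of_isMinOn {s : Set E} {f : E → ℝ} {m : ℝ}
    (hf : StrongConvexOn s m f) {x y : E} (hx : x ∈ s) (hy : y ∈ s) (hmin : IsMinOn f s x) :
    f x + m / 2 * ‖y - x‖ ^ 2 ≤ f y := by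
  have hsegment : ∀ t ∈ Ioo (0 : ℝ) 1, f x + (1 - t) * (m / 2 * ‖y - x‖ ^ 2) ≤ f y := by
    rintro t ⟨ht0, ht1⟩
    have hconv := hf.2 hx hy (sub_pos.2 ht1).le ht0.le (sub_add_cancel 1 t)
    have hle : f x ≤ f ((1 - t) • x + t • y) :=
      hmin (hf.1 hx hy (sub_pos.2 ht1).le ht0.le (sub_add_cancel 1 t))
    rw [norm_sub_rev] at hconv
    simp only [smul_eq_mul] at hconv
    have : t * (f x + (1 - t) * (m / 2 * ‖y - x‖ ^ 2)) ≤ t * f y := by linarith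
    exact le_of_mul_le_mul_left this ht0
  have hlim : Tendsto (fun t : ℝ ↦ f x + (1 - t) * (m / 2 * ‖y - x‖ ^ 2)) (𝓝[>] 0)
      (𝓝 (f x + m / 2 * ‖y - x‖ ^ 2)) :=
    tendsto_nhdsWithin_of_tendsto_nhds <|
      (by fun_prop : Continuous fun t : ℝ ↦ f x + (1 - t) * (m / 2 * ‖y - x‖ ^ 2)).tendsto' 0 _
        (by ring)
  exact le_of_tendsto hlim (eventually_of_mem (Ioo_mem_nhdsGT one_pos) hsegment)

end NormedSpace

section InnerProductSpace

variable {E : Type*} [NormedAddCommGroup E] [InnerProductSpace ℝ E]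

theorem ConvexOn.strongConvexOn_add_mul_sq_norm_sub {s : Set E} {g : E → ℝ} (hg : ConvexOn ℝ s g)
    (m : ℝ) (a : E) : StrongConvexOn s m fun z ↦ g z + m / 2 * ‖z - a‖ ^ 2 := by
  rw [strongConvexOn_iff_convex]
  refine (hg.add (((innerₛₗ ℝ (-(m • a))).convexOn hg.1).add_const (m / 2 * ‖a‖ ^ 2))).congr
    fun z _ ↦ ?_
  simp only [Pi.add_apply, innerₛₗ_apply_apply, inner_neg_left, real_inner_smul_left,
    norm_sub_sq_real, real_inner_comm a z]
  ring

theorem le_add_inner_add_half_mul_sq_of_lipschitz_gradient [CompleteSpace E] {f : E → ℝ}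
    {f' : E → E} {L : ℝ} (hf : ∀ z, HasGradientAt f (f' z) z)
    (hLip : ∀ z₁ z₂, ‖f' z₁ - f' z₂‖ ≤ L * ‖z₁ - z₂‖) (x y : E) :
    f y ≤ f x + ⟪f' x, y - x⟫ + L / 2 * ‖y - x‖ ^ 2 := by
  set d := y - x
  let φ : ℝ → ℝ := fun t ↦ f (x + t • d) - t * ⟪f' x, d⟫ - L / 2 * t ^ 2 * ‖d‖ ^ 2
  have hφ : ∀ t, HasDerivAt φ (⟪f' (x + t • d), d⟫ - ⟪f' x, d⟫ - L * t * ‖d‖ ^ 2) t := by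
    intro t
    have hline : HasDerivAt (fun t : ℝ ↦ x + t • d) d t := by
      simpa using ((hasDerivAt_id t).smul_const d).const_add x
    have hfline := (hf (x + t • d)).hasFDerivAt.comp_hasDerivAt t hline
    refine ((hfline.sub ((hasDerivAt_id t).mul_const ⟪f' x, d⟫)).sub
      (((hasDerivAt_pow 2 t).const_mul (L / 2)).mul_const (‖d‖ ^ 2))).congr_deriv ?_
    simp only [InnerProductSpace.toDual_apply_apply]
    ring
  have hφ'_nonpos : ∀ t, 0 ≤ t → ⟪f' (x + t • d), d⟫ - ⟪f' x, d⟫ - L * t * ‖d‖ ^ 2 ≤ 0 := by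
    intro t ht
    have : ⟪f' (x + t • d) - f' x, d⟫ ≤ L * t * ‖d‖ ^ 2 :=
      calc ⟪f' (x + t • d) - f' x, d⟫ ≤ ‖f' (x + t • d) - f' x‖ * ‖d‖ := real_inner_le_norm _ _
        _ ≤ L * ‖t • d‖ * ‖d‖ := by gcongr; simpa using hLip (x + t • d) x
        _ = L * t * ‖d‖ ^ 2 := by rw [norm_smul, Real.norm_of_nonneg ht]; ring
    rw [inner_sub_left] at this
    linarith
  have hanti : AntitoneOn φ (Ici 0) :=
    antitoneOn_of_deriv_nonpos (convex_Ici 0) (fun t _ ↦ (hφ t).continuousAt.continuousWithinAt)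
      (fun t _ ↦ (hφ t).differentiableAt.differentiableWithinAt)
      (fun t ht ↦ (hφ t).deriv ▸ hφ'_nonpos t (interior_Ici.subset ht).le)
  have h01 : φ 1 ≤ φ 0 := hanti (mem_Ici.2 le_rfl) (mem_Ici.2 zero_le_one) zero_le_one
  simp only [φ, d, one_smul, zero_smul, add_sub_cancel, add_zero] at h01
  linarith

end InnerProductSpace

theorem ista_sufficient_decrease_general (n : ℕ)
    (f g : EuclideanSpace ℝ (Fin n) → ℝ)
    (f' : EuclideanSpace ℝ (Fin n) → EuclideanSpace ℝ (Fin n))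
    (hf : ∀ z, HasGradientAt f (f' z) z)
    (L : ℝ)
    (hLip : ∀ z₁ z₂, ‖f' z₁ - f' z₂‖ ≤ L * ‖z₁ - z₂‖)
    (hg : ConvexOn ℝ Set.univ g)
    (γ : ℝ) (hγ : 0 < γ) (hγL : γ ≤ 1 / L)
    (a aplus : EuclideanSpace ℝ (Fin n))
    (hmin : ∀ z, ⟪f' a, aplus - a⟫ + (1/(2*γ)) * ‖aplus - a‖^2 + g aplus
      ≤ ⟪f' a, z - a⟫ + (1/(2*γ)) * ‖z - a‖^2 + g z) :
    f aplus + g aplus - (f a + g a) ≤ -(1/(2*γ)) * ‖aplus - a‖^2 := by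
  set κ := 1 / (2 * γ)
  have hLκ : L / 2 ≤ κ := by
    have hLγ : L ≤ 1 / γ := by
      rcases le_or_gt L 0 with hL | hL
      · exact hL.trans (by positivity)
      · exact (le_one_div hL hγ).2 hγL
    calc L / 2 ≤ 1 / γ / 2 := by gcongr
      _ = κ := by rw [div_div, mul_comm]
  have hmodel :
      StrongConvexOn univ (2 * κ) fun z ↦ ⟪f' a, z - a⟫ + g z + 2 * κ / 2 * ‖z - a‖ ^ 2 :=
    ConvexOn.strongConvexOn_add_mul_sq_norm_sub
      ((((innerₛₗ ℝ (f' a)).convexOn convex_univ).add_const (-⟪f' a, a⟫)).add hg |>.congr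
        fun z _ ↦ by simp only [coe_innerₛₗ_apply, Pi.add_apply, inner_sub_right]; ring) _ a
  have hgrowth := hmodel.add_half_mul_sq_norm_sub_le_of_isMinOn (mem_univ aplus) (mem_univ a)
    (isMinOn_iff.2 fun z _ ↦ by linarith [hmin z])
  have hdescent := le_add_inner_add_half_mul_sq_of_lipschitz_gradient hf hLip a aplus
  simp only [sub_self, inner_zero_right, norm_zero, norm_sub_rev a aplus] at hgrowth
  nlinarith [mul_le_mul_of_nonneg_right hLκ (sq_nonneg ‖aplus - a‖)]

/-- Sufficient decrease of the proximal-gradient (ISTA) step: if `f` has `L`-Lipschitz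
gradient, `g` is convex, `γ ∈ (0, 1/L]`, and `a⁺` minimizes
`z ↦ ⟨∇f(a), z - a⟩ + (1/(2γ))‖z - a‖² + g(z)`, then
`f(a⁺) + g(a⁺) - (f(a) + g(a)) ≤ -(1/(2γ))‖a⁺ - a‖²`. -/
theorem ista_sufficient_decrease (n : ℕ)
    (f g : EuclideanSpace ℝ (Fin n) → ℝ)
    (f' : EuclideanSpace ℝ (Fin n) → EuclideanSpace ℝ (Fin n))
    (hf : ∀ z, HasGradientAt f (f' z) z)
    (L : ℝ) (hL : 0 < L)
    (hLip : ∀ z₁ z₂, ‖f' z₁ - f' z₂‖ ≤ L * ‖z₁ - z₂‖)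
    (hg : ConvexOn ℝ Set.univ g)
    (γ : ℝ) (hγ : 0 < γ) (hγL : γ ≤ 1 / L)
    (a aplus : EuclideanSpace ℝ (Fin n))
    (hmin : ∀ z, ⟪f' a, aplus - a⟫ + (1/(2*γ)) * ‖aplus - a‖^2 + g aplus
      ≤ ⟪f' a, z - a⟫ + (1/(2*γ)) * ‖z - a‖^2 + g z) :
    f aplus + g aplus - (f a + g a) ≤ -(1/(2*γ)) * ‖aplus - a‖^2 :=
  ista_sufficient_decrease_general n f g f' hf L hLip hg γ hγ hγL a aplus hmin
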